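/- arXiv:1111.1345 — 2 statements merged into one kernel-verified Lean document; each statement's English description precedes it below -/
import Mathlib

section
/- With the definitions of sofic measure entropy via finite partitions, the sets Hom_μ(α,F,δ,σ) are monotone: if α ≤ α' (α' refines α), F ⊆ F', δ ≥ δ', then restriction to Σ(α_F) maps Hom_μ(α',F',δ',σ) into Hom_μ(α,F,δ,σ); consequently, if additionally ξ ≥ ξ' are partitions with ξ ≤ α and ξ' ≤ α', then |Hom_μ(α,F,δ,σ)|_ξ ≥ |Hom_μ(α',F',δ',σ)|_{ξ'}. -/
open MeasureTheory Filter Finset Pointwise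

section Defs

variable {G : Type*} [Group G] [DecidableEq G]
variable {X : Type*} [MeasurableSpace X] [MulAction G X]

/-- A finite measurable partition of `X`, indexed by `Fin n`. -/
def IsFinPartition {n : ℕ} (P : Fin n → Set X) : Prop :=
  (∀ i, MeasurableSet (P i)) ∧ Pairwise (Function.onFun Disjoint P) ∧ (⋃ i, P i) = Set.univ

/-- `A` refines `P` via the index map `r` (each atom of `A` is contained in an atom of `P`). -/
def PartRefines {X : Type*} {m n : ℕ} (A : Fin m → Set X) (P : Fin n → Set X)
    (r : Fin m → Fin n) : Prop :=
  ∀ i, A i ⊆ P (r i)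

/-- The uniform probability measure `ζ` of a subset of `{1,…,d}`. -/
noncomputable def unif {d : ℕ} (S : Set (Fin d)) : ℝ := S.ncard / d

/-- The cell `⋂_{s∈F} s A_{f(s)}` of the join partition `α_F`. -/
def cellF {m : ℕ} (A : Fin m → Set X) (F : Finset G) (f : {s // s ∈ F} → Fin m) : Set X :=
  ⋂ s : {s // s ∈ F}, (s : G) • A (f s)

/-- Given the values `φ f` of a homomorphism on the cells of `α_F` (indexed by functions
`G → Fin m`, depending only on the restriction to `F`), the image `φ(s A_i)`. -/
def sBlock {m d : ℕ} (φ : (G → Fin m) → Set (Fin d)) (s : G) (i : Fin m) : Set (Fin d) :=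
  ⋃ f ∈ {f : G → Fin m | f s = i}, φ f

/-- The image under `φ` of the cell of `α_F` determined by `f : F → Fin m`. -/
def cellBlock {m d : ℕ} (φ : (G → Fin m) → Set (Fin d)) (F : Finset G)
    (f : {s // s ∈ F} → Fin m) : Set (Fin d) :=
  ⋃ g ∈ {g : G → Fin m | ∀ s : {s // s ∈ F}, g (s : G) = f s}, φ g

/-- `φ ∈ Hom_μ(α, F, δ, σ)`: `φ` is (the atom data of) a Boolean algebra homomorphism
`Σ(α_F) → P({1,…,d})` which is approximately equivariant and approximately
measure-preserving to within `δ`. -/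
def IsHom (μ : Measure X) {m : ℕ} (A : Fin m → Set X) (F : Finset G) (δ : ℝ)
    {d : ℕ} (σ : G → Equiv.Perm (Fin d)) (φ : (G → Fin m) → Set (Fin d)) : Prop :=
  (∀ f g : G → Fin m, (∀ s ∈ F, f s = g s) → φ f = φ g) ∧
  (∀ f g : G → Fin m, (∃ s ∈ F, f s ≠ g s) → Disjoint (φ f) (φ g)) ∧
  (⋃ f, φ f) = Set.univ ∧
  (∀ s ∈ F, ∑ i : Fin m,
      unif (symmDiff ((σ s) '' sBlock φ 1 i) (sBlock φ s i)) < δ) ∧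
  (∑ f : {s // s ∈ F} → Fin m,
      |unif (cellBlock φ F f) - (μ (cellF A F f)).toReal| < δ)

/-- The restriction of `φ` to the coarser partition `ξ`, along the refinement map `r`. -/
def restrictHom {m n d : ℕ} (r : Fin m → Fin n) (φ : (G → Fin m) → Set (Fin d)) :
    Fin n → Set (Fin d) :=
  fun j => ⋃ f ∈ {f : G → Fin m | r (f 1) = j}, φ f

/-- `|Hom_μ(α,F,δ,σ)|_ξ`: the number of restrictions to `ξ` of elements of
`Hom_μ(α,F,δ,σ)`. -/
noncomputable def homCount (μ : Measure X) {m n : ℕ} (A : Fin m → Set X) (r : Fin m → Fin n)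
    (F : Finset G) (δ : ℝ) {d : ℕ} (σ : G → Equiv.Perm (Fin d)) : ℕ :=
  (restrictHom r '' {φ | IsHom μ A F δ σ φ}).ncard

/-- `h_{Σ,μ}^ξ(α,F,δ)`. -/
noncomputable def hFδ (μ : Measure X) {m n : ℕ} (A : Fin m → Set X) (r : Fin m → Fin n)
    (F : Finset G) (δ : ℝ) (d : ℕ → ℕ) (σ : ∀ i, G → Equiv.Perm (Fin (d i))) : ℝ :=
  limsup (fun i => Real.log (homCount μ A r F δ (σ i)) / d i) atTop

/-- `h_{Σ,μ}^ξ(α) = inf_F inf_δ h_{Σ,μ}^ξ(α,F,δ)`, the infimum over nonempty finite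
`F ⊆ G` (containing the identity, so that `α ⊆ Σ(α_F)`) and `δ > 0`. -/
noncomputable def hPartLoc (μ : Measure X) {m n : ℕ} (A : Fin m → Set X) (r : Fin m → Fin n)
    (d : ℕ → ℕ) (σ : ∀ i, G → Equiv.Perm (Fin (d i))) : ℝ :=
  sInf { x | ∃ (F : Finset G) (δ : ℝ), (1 : G) ∈ F ∧ 0 < δ ∧ x = hFδ μ A r F δ d σ }

/-- `h_{Σ,μ}^ξ(S)`: the infimum over finite partitions `α ⊆ S` refining `ξ`. -/
noncomputable def hXi (μ : Measure X) (S : Set (Set X)) {n : ℕ} (P : Fin n → Set X)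
    (d : ℕ → ℕ) (σ : ∀ i, G → Equiv.Perm (Fin (d i))) : ℝ :=
  sInf { x | ∃ (m : ℕ) (A : Fin m → Set X) (r : Fin m → Fin n),
    IsFinPartition A ∧ (∀ i, A i ∈ S) ∧ PartRefines A P r ∧
    x = hPartLoc μ A r d σ }

/-- `h_{Σ,μ}(S)`: the supremum over finite partitions `ξ ⊆ S` of `h_{Σ,μ}^ξ(S)`. -/
noncomputable def hAlg (μ : Measure X) (S : Set (Set X))
    (d : ℕ → ℕ) (σ : ∀ i, G → Equiv.Perm (Fin (d i))) : ℝ :=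
  sSup { x | ∃ (n : ℕ) (P : Fin n → Set X),
    IsFinPartition P ∧ (∀ j, P j ∈ S) ∧ x = hXi μ S P d σ }

/-- `Σ = (σ i : G → Sym(d i))` is a sofic approximation sequence: asymptotically
multiplicative and free. -/
def IsSoficApprox {G : Type*} [Group G] (d : ℕ → ℕ)
    (σ : ∀ i, G → Equiv.Perm (Fin (d i))) : Prop :=
  (∀ s t : G, Tendsto (fun i =>
      (({k : Fin (d i) | σ i (s * t) k = σ i s (σ i t k)}.ncard : ℝ)) / d i)
      atTop (nhds 1)) ∧
  (∀ s t : G, s ≠ t → Tendsto (fun i =>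
      (({k : Fin (d i) | σ i s k ≠ σ i t k}.ncard : ℝ)) / d i)
      atTop (nhds 1))

/-- The Shannon entropy `H_μ(P)` of a finite partition. -/
noncomputable def shannonEnt (μ : Measure X) {n : ℕ} (P : Fin n → Set X) : ℝ :=
  -∑ i, (μ (P i)).toReal * Real.log (μ (P i)).toReal

end Defs

/-- The restriction of a homomorphism defined on `Σ(α'_{F'})` (atom data indexed by
`G → Fin m'`) to the subalgebra `Σ(α_F)` along the refinement map `rα : Fin m' → Fin m`,
for `F ⊆ F'`. -/
def coarsenHom {G : Type*} {m' m d : ℕ} (rα : Fin m' → Fin m) (F : Finset G)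
    (φ : (G → Fin m') → Set (Fin d)) : (G → Fin m) → Set (Fin d) :=
  fun f => ⋃ g ∈ {g : G → Fin m' | ∀ s ∈ F, rα (g s) = f s}, φ g


section AuxLemmas

section Helpers

lemma unif_nonneg {d : ℕ} (S : Set (Fin d)) : 0 ≤ unif S := by
  unfold unif; positivity

lemma div_cast_le {a b c : ℕ} (h : a ≤ b) : (a:ℝ)/c ≤ (b:ℝ)/c := by
  rw [div_eq_mul_inv, div_eq_mul_inv]
  exact mul_le_mul_of_nonneg_right (by exact_mod_cast h) (by positivity)

lemma unif_mono {d : ℕ} {S T : Set (Fin d)} (h : S ⊆ T) : unif S ≤ unif T :=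
  div_cast_le (Set.ncard_le_ncard h (Set.toFinite T))

lemma ncard_iUnion_le {d : ℕ} {ι : Type*} [Fintype ι] (B : ι → Set (Fin d)) :
    (⋃ i, B i).ncard ≤ ∑ i, (B i).ncard := by
  classical
  have h1 : (⋃ i, B i).toFinset = Finset.univ.biUnion (fun i => (B i).toFinset) := by
    ext x; simp
  rw [Set.ncard_eq_toFinset_card' , h1]
  refine (Finset.card_biUnion_le).trans ?_
  exact Finset.sum_le_sum fun i _ => by rw [Set.ncard_eq_toFinset_card']

lemma ncard_iUnion_eq {d : ℕ} {ι : Type*} [Fintype ι] (B : ι → Set (Fin d))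
    (hd : Pairwise (Function.onFun Disjoint B)) :
    (⋃ i, B i).ncard = ∑ i, (B i).ncard := by
  classical
  have h1 : (⋃ i, B i).toFinset = Finset.univ.biUnion (fun i => (B i).toFinset) := by
    ext x; simp
  rw [Set.ncard_eq_toFinset_card', h1, Finset.card_biUnion]
  · exact Finset.sum_congr rfl fun i _ => by rw [Set.ncard_eq_toFinset_card']
  · intro i _ j _ hij
    exact Set.disjoint_toFinset.mpr (hd hij)

lemma unif_iUnion_le {d : ℕ} {ι : Type*} [Fintype ι] (B : ι → Set (Fin d)) :
    unif (⋃ i, B i) ≤ ∑ i, unif (B i) := by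
  unfold unif
  rw [← Finset.sum_div]
  have h2 : ((⋃ i, B i).ncard : ℝ) / d ≤ ((∑ i, (B i).ncard : ℕ) : ℝ) / d :=
    div_cast_le (ncard_iUnion_le B)
  refine h2.trans (le_of_eq ?_)
  push_cast
  rfl

lemma unif_iUnion_eq {d : ℕ} {ι : Type*} [Fintype ι] (B : ι → Set (Fin d))
    (hd : Pairwise (Function.onFun Disjoint B)) :
    unif (⋃ i, B i) = ∑ i, unif (B i) := by
  unfold unif
  rw [← Finset.sum_div, ncard_iUnion_eq B hd]
  push_cast
  ring

lemma symmDiff_iUnion_subset {α : Type*} {ι : Type*} (B C : ι → Set α) :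
    symmDiff (⋃ i, B i) (⋃ i, C i) ⊆ ⋃ i, symmDiff (B i) (C i) := by
  intro x hx
  rw [Set.mem_symmDiff] at hx
  rcases hx with ⟨hx1, hx2⟩ | ⟨hx1, hx2⟩ <;>
    simp only [Set.mem_iUnion, not_exists] at hx1 hx2 <;>
    obtain ⟨i, hi⟩ := hx1
  · exact Set.mem_iUnion.mpr ⟨i, Set.mem_symmDiff.mpr (Or.inl ⟨hi, hx2 i⟩)⟩
  · exact Set.mem_iUnion.mpr ⟨i, Set.mem_symmDiff.mpr (Or.inr ⟨hi, hx2 i⟩)⟩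

lemma sum_fiber_subtype {ι κ M : Type*} [Fintype ι] [Fintype κ] [DecidableEq κ]
    [AddCommMonoid M] (g : ι → κ) (f : ι → M) :
    ∑ j : κ, ∑ i : {i // g i = j}, f i = ∑ i, f i := by
  classical
  have h : ∀ j : κ, ∑ i : {i // g i = j}, f (i : ι)
      = ∑ i ∈ Finset.univ.filter (g · = j), f i :=
    fun j => (Finset.sum_subtype _ (by simp) f).symm
  simp_rw [h]
  exact Finset.sum_fiberwise _ _ _

lemma smul_set_measurable {G X : Type*} [Group G] [MeasurableSpace X] [MulAction G X]
    {μ : Measure X} (hact : ∀ g : G, MeasurePreserving (fun x : X => g • x) μ μ)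
    (g : G) {A : Set X} (hA : MeasurableSet A) : MeasurableSet (g • A) := by
  have h : g • A = (fun x : X => g⁻¹ • x) ⁻¹' A := by
    ext x; simp [Set.mem_smul_set_iff_inv_smul_mem]
  rw [h]
  exact (hact g⁻¹).measurable hA

end Helpers

section Idents

variable {G : Type*} [Group G] [DecidableEq G]
variable {X : Type*} [MeasurableSpace X] [MulAction G X]

lemma coarsen_sBlock {m' m d : ℕ} (rα : Fin m' → Fin m)
    (F : Finset G) (φ : (G → Fin m') → Set (Fin d)) {s : G} (hs : s ∈ F) (i : Fin m) :
    sBlock (coarsenHom rα F φ) s i = ⋃ j : {j : Fin m' // rα j = i}, sBlock φ s (j : Fin m') := by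
  ext x
  simp only [sBlock, coarsenHom, Set.mem_iUnion, Set.mem_setOf_eq, exists_prop]
  constructor
  · rintro ⟨f, hf, g, hg, hx⟩
    exact ⟨⟨g s, by rw [hg s hs, hf]⟩, g, rfl, hx⟩
  · rintro ⟨⟨j, hj⟩, g, hg, hx⟩
    refine ⟨fun t => rα (g t), ?_, g, fun t _ => rfl, hx⟩
    show rα (g s) = i
    rw [show g s = j from hg, hj]

/-- the fiber projection -/
def projF {m' m : ℕ} {G : Type*} (rα : Fin m' → Fin m) {F F' : Finset G} (hFF' : F ⊆ F')
    (f' : {s // s ∈ F'} → Fin m') : {s // s ∈ F} → Fin m :=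
  fun s => rα (f' ⟨s.1, hFF' s.2⟩)

lemma coarsen_cellBlock {m' m d : ℕ} (rα : Fin m' → Fin m)
    {F F' : Finset G} (hFF' : F ⊆ F') (φ : (G → Fin m') → Set (Fin d))
    (f : {s // s ∈ F} → Fin m) :
    cellBlock (coarsenHom rα F φ) F f
      = ⋃ f' : {f' : {s // s ∈ F'} → Fin m' // projF rα hFF' f' = f},
          cellBlock φ F' (f' : {s // s ∈ F'} → Fin m') := by
  ext x
  simp only [cellBlock, coarsenHom, Set.mem_iUnion, Set.mem_setOf_eq, exists_prop, projF]
  constructor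
  · rintro ⟨g, hg, h, hh, hx⟩
    -- hg : ∀ s : {s // s ∈ F}, g s = f s ; hh : ∀ s ∈ F, rα (h s) = g s
    refine ⟨⟨fun s => h s.1, ?_⟩, h, fun s => rfl, hx⟩
    funext s
    exact (hh s.1 s.2).trans (hg s)
  · rintro ⟨⟨f', hf'⟩, h, hh, hx⟩
    -- hf' : projF = f ; hh : ∀ s : {s // s ∈ F'}, h s = f' s
    refine ⟨fun t => rα (h t), ?_, h, fun t _ => rfl, hx⟩
    intro s
    show rα (h s.1) = f s
    rw [show h s.1 = f' ⟨s.1, hFF' s.2⟩ from hh ⟨s.1, hFF' s.2⟩]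
    exact congrFun hf' s

lemma cellBlock_disjoint {m' d : ℕ} {F' : Finset G} (φ : (G → Fin m') → Set (Fin d))
    (hdisj : ∀ f g : G → Fin m', (∃ s ∈ F', f s ≠ g s) → Disjoint (φ f) (φ g))
    {f' g' : {s // s ∈ F'} → Fin m'} (hne : f' ≠ g') :
    Disjoint (cellBlock φ F' f') (cellBlock φ F' g') := by
  obtain ⟨s0, hs0⟩ := Function.ne_iff.mp hne
  rw [Set.disjoint_left]
  rintro x hx hx'
  simp only [cellBlock, Set.mem_iUnion, Set.mem_setOf_eq, exists_prop] at hx hx'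
  obtain ⟨h, hh, hx⟩ := hx
  obtain ⟨h2, hh2, hx'⟩ := hx'
  have : Disjoint (φ h) (φ h2) := by
    refine hdisj h h2 ⟨s0.1, s0.2, ?_⟩
    rw [hh s0, hh2 s0]
    exact hs0
  exact Set.disjoint_left.mp this hx hx'

lemma cellF_disjoint {m' : ℕ} {F' : Finset G} (A' : Fin m' → Set X)
    (hA' : IsFinPartition A')
    {f' g' : {s // s ∈ F'} → Fin m'} (hne : f' ≠ g') :
    Disjoint (cellF A' F' f') (cellF A' F' g') := by
  obtain ⟨s0, hs0⟩ := Function.ne_iff.mp hne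
  rw [Set.disjoint_left]
  intro x hx hx'
  have h1 : x ∈ (s0 : G) • A' (f' s0) := Set.mem_iInter.mp hx s0
  have h2 : x ∈ (s0 : G) • A' (g' s0) := Set.mem_iInter.mp hx' s0
  rw [Set.mem_smul_set_iff_inv_smul_mem] at h1 h2
  exact Set.disjoint_left.mp (hA'.2.1 hs0) h1 h2

lemma cellF_measurable {m' : ℕ} {μ : Measure X}
    (hact : ∀ g : G, MeasurePreserving (fun x : X => g • x) μ μ)
    {F' : Finset G} (A' : Fin m' → Set X) (hA' : IsFinPartition A')
    (f' : {s // s ∈ F'} → Fin m') : MeasurableSet (cellF A' F' f') :=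
  MeasurableSet.iInter fun s => smul_set_measurable hact _ (hA'.1 _)

lemma coarsen_cellF {m' m : ℕ} (A : Fin m → Set X) (A' : Fin m' → Set X)
    (hA : IsFinPartition A) (hA' : IsFinPartition A')
    (rα : Fin m' → Fin m) (hrα : PartRefines A' A rα)
    {F F' : Finset G} (hFF' : F ⊆ F') (f : {s // s ∈ F} → Fin m) :
    cellF A F f = ⋃ f' : {f' : {s // s ∈ F'} → Fin m' // projF rα hFF' f' = f},
        cellF A' F' (f' : {s // s ∈ F'} → Fin m') := by
  ext x
  simp only [cellF, Set.mem_iUnion, Set.mem_iInter]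
  constructor
  · intro hx
    have hch : ∀ s : {s // s ∈ F'}, ∃ j, ((s : G))⁻¹ • x ∈ A' j := by
      intro s
      have : ((s : G))⁻¹ • x ∈ ⋃ j, A' j := hA'.2.2 ▸ Set.mem_univ _
      exact Set.mem_iUnion.mp this
    choose f' hf' using hch
    refine ⟨⟨f', ?_⟩, fun s => ?_⟩
    · funext s
      have h1 : ((s : G))⁻¹ • x ∈ A (rα (f' ⟨s.1, hFF' s.2⟩)) :=
        hrα _ (hf' ⟨s.1, hFF' s.2⟩)
      have h2 : ((s : G))⁻¹ • x ∈ A (f s) :=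
        Set.mem_smul_set_iff_inv_smul_mem.mp (hx s)
      by_contra hne
      exact Set.disjoint_left.mp (hA.2.1 hne) h1 h2
    · exact Set.mem_smul_set_iff_inv_smul_mem.mpr (hf' s)
  · rintro ⟨⟨f', hf'⟩, hx⟩
    intro s
    have h1 : x ∈ (s : G) • A' (f' ⟨s.1, hFF' s.2⟩) := hx ⟨s.1, hFF' s.2⟩
    have h2 : A' (f' ⟨s.1, hFF' s.2⟩) ⊆ A (f s) := by
      rw [← congrFun hf' s]
      exact hrα _
    exact Set.smul_set_mono h2 h1

end Idents

lemma coarsen_isHom {G : Type*} [Group G] [DecidableEq G]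
    {X : Type*} [MeasurableSpace X] [MulAction G X]
    (μ : Measure X) [IsProbabilityMeasure μ]
    (hact : ∀ g : G, MeasurePreserving (fun x : X => g • x) μ μ)
    {d : ℕ} (σ : G → Equiv.Perm (Fin d))
    {m m' : ℕ} (A : Fin m → Set X) (A' : Fin m' → Set X)
    (hA : IsFinPartition A) (hA' : IsFinPartition A')
    (rα : Fin m' → Fin m) (hrα : PartRefines A' A rα)
    (F F' : Finset G) (hF : (1:G) ∈ F) (hFF' : F ⊆ F')
    {δ δ' : ℝ} (hδδ' : δ' ≤ δ)
    (φ : (G → Fin m') → Set (Fin d)) (hφ : IsHom μ A' F' δ' σ φ) :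
    IsHom μ A F δ σ (coarsenHom rα F φ) := by
  -- classical removed
  obtain ⟨h1, h2, h3, h4, h5⟩ := hφ
  refine ⟨?_, ?_, ?_, ?_, ?_⟩
  · -- depends only on F
    intro f g hfg
    ext x
    simp only [coarsenHom, Set.mem_iUnion, Set.mem_setOf_eq, exists_prop]
    constructor
    · rintro ⟨h, hh, hx⟩
      exact ⟨h, fun s hs => (hh s hs).trans (hfg s hs), hx⟩
    · rintro ⟨h, hh, hx⟩
      exact ⟨h, fun s hs => (hh s hs).trans (hfg s hs).symm, hx⟩
  · -- disjointness
    rintro f g ⟨s, hs, hfg⟩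
    rw [Set.disjoint_left]
    intro x hx hx'
    simp only [coarsenHom, Set.mem_iUnion, Set.mem_setOf_eq, exists_prop] at hx hx'
    obtain ⟨h, hh, hx⟩ := hx
    obtain ⟨h', hh', hx'⟩ := hx'
    have hne : h s ≠ h' s := fun e => hfg (by rw [← hh s hs, ← hh' s hs, e])
    exact Set.disjoint_left.mp (h2 h h' ⟨s, hFF' hs, hne⟩) hx hx'
  · -- union is univ
    ext x
    simp only [Set.mem_univ, iff_true, Set.mem_iUnion, coarsenHom, Set.mem_setOf_eq, exists_prop]
    have hx : x ∈ ⋃ g, φ g := h3 ▸ Set.mem_univ x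
    obtain ⟨g, hg⟩ := Set.mem_iUnion.mp hx
    exact ⟨fun t => rα (g t), g, fun s _ => rfl, hg⟩
  · -- approximate equivariance
    intro s hs
    have key : ∀ i : Fin m,
        unif (symmDiff ((σ s) '' sBlock (coarsenHom rα F φ) 1 i)
            (sBlock (coarsenHom rα F φ) s i))
          ≤ ∑ j : {j : Fin m' // rα j = i},
              unif (symmDiff ((σ s) '' sBlock φ 1 (j : Fin m')) (sBlock φ s (j : Fin m'))) := by
      intro i
      rw [coarsen_sBlock rα F φ hF i, coarsen_sBlock rα F φ hs i, Set.image_iUnion]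
      exact (unif_mono (symmDiff_iUnion_subset _ _)).trans (unif_iUnion_le _)
    calc ∑ i : Fin m, unif (symmDiff ((σ s) '' sBlock (coarsenHom rα F φ) 1 i)
            (sBlock (coarsenHom rα F φ) s i))
        ≤ ∑ i : Fin m, ∑ j : {j : Fin m' // rα j = i},
            unif (symmDiff ((σ s) '' sBlock φ 1 (j : Fin m')) (sBlock φ s (j : Fin m'))) :=
          Finset.sum_le_sum fun i _ => key i
      _ = ∑ j : Fin m', unif (symmDiff ((σ s) '' sBlock φ 1 j) (sBlock φ s j)) :=
          sum_fiber_subtype rα (fun j => unif (symmDiff ((σ s) '' sBlock φ 1 j) (sBlock φ s j)))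
      _ < δ' := h4 s (hFF' hs)
      _ ≤ δ := hδδ'
  · -- approximate measure preservation
    have hcell : ∀ f : {s // s ∈ F} → Fin m,
        |unif (cellBlock (coarsenHom rα F φ) F f) - (μ (cellF A F f)).toReal|
          ≤ ∑ f' : {f' : {s // s ∈ F'} → Fin m' // projF rα hFF' f' = f},
              |unif (cellBlock φ F' (f' : {s // s ∈ F'} → Fin m'))
                - (μ (cellF A' F' (f' : {s // s ∈ F'} → Fin m'))).toReal| := by
      intro f
      have hu : unif (cellBlock (coarsenHom rα F φ) F f)
          = ∑ f' : {f' : {s // s ∈ F'} → Fin m' // projF rα hFF' f' = f},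
              unif (cellBlock φ F' (f' : {s // s ∈ F'} → Fin m')) := by
        rw [coarsen_cellBlock rα hFF' φ f]
        exact unif_iUnion_eq _ (fun f1 f2 hne =>
          cellBlock_disjoint φ h2 (fun e => hne (Subtype.ext e)))
      have hm : (μ (cellF A F f)).toReal
          = ∑ f' : {f' : {s // s ∈ F'} → Fin m' // projF rα hFF' f' = f},
              (μ (cellF A' F' (f' : {s // s ∈ F'} → Fin m'))).toReal := by
        rw [coarsen_cellF A A' hA hA' rα hrα hFF' f,
          measure_iUnion (fun f1 f2 hne => cellF_disjoint A' hA' (fun e => hne (Subtype.ext e)))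
            (fun f' => cellF_measurable hact A' hA' _),
          tsum_fintype]
        exact ENNReal.toReal_sum fun a _ => measure_ne_top μ _
      rw [hu, hm, ← Finset.sum_sub_distrib]
      exact Finset.abs_sum_le_sum_abs _ _
    calc ∑ f : {s // s ∈ F} → Fin m,
          |unif (cellBlock (coarsenHom rα F φ) F f) - (μ (cellF A F f)).toReal|
        ≤ ∑ f : {s // s ∈ F} → Fin m,
            ∑ f' : {f' : {s // s ∈ F'} → Fin m' // projF rα hFF' f' = f},
              |unif (cellBlock φ F' (f' : {s // s ∈ F'} → Fin m'))
                - (μ (cellF A' F' (f' : {s // s ∈ F'} → Fin m'))).toReal| :=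
          Finset.sum_le_sum fun f _ => hcell f
      _ = ∑ f' : {s // s ∈ F'} → Fin m',
            |unif (cellBlock φ F' f') - (μ (cellF A' F' f')).toReal| :=
          sum_fiber_subtype (projF rα hFF') (fun f' => |unif (cellBlock φ F' f') - (μ (cellF A' F' f')).toReal|)
      _ < δ' := h5
      _ ≤ δ := hδδ'

lemma restrict_coarsen {G : Type*} [Group G] [DecidableEq G]
    {m m' n n' d : ℕ} (rα : Fin m' → Fin m) (rξ : Fin m → Fin n) (rξ' : Fin m' → Fin n')
    (s : Fin n → Fin n') (hcoh : ∀ i, rξ' i = s (rξ (rα i)))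
    (F : Finset G) (hF : (1:G) ∈ F) (φ : (G → Fin m') → Set (Fin d)) :
    restrictHom rξ' φ = fun j' => ⋃ j : {j : Fin n // s j = j'},
      restrictHom rξ (coarsenHom rα F φ) (j : Fin n) := by
  funext j'
  ext x
  simp only [restrictHom, coarsenHom, Set.mem_iUnion, Set.mem_setOf_eq, exists_prop]
  constructor
  · rintro ⟨h, hh, hx⟩
    exact ⟨⟨rξ (rα (h 1)), by rw [← hcoh]; exact hh⟩, fun t => rα (h t), rfl,
      h, fun t _ => rfl, hx⟩
  · rintro ⟨⟨j, hj⟩, f, hf, h, hh, hx⟩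
    refine ⟨h, ?_, hx⟩
    rw [hcoh, hh 1 hF, show rξ (f 1) = j from hf, hj]

end AuxLemmas

/-- monotonicity of `Hom_μ`.  If `α ≤ α'` (i.e. `α'` refines `α`,
via `rα`), `F ⊆ F'`, and `δ ≥ δ'`, then restriction to `Σ(α_F)` maps
`Hom_μ(α',F',δ',σ)` into `Hom_μ(α,F,δ,σ)`; consequently, if moreover `ξ ≥ ξ'` are
partitions (`ξ` refining `ξ'` via `s`) with `ξ ≤ α` (via `rξ`) and `ξ' ≤ α'`
(via `rξ'`, coherently, `rξ' = s ∘ rξ ∘ rα`), then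
`|Hom_μ(α,F,δ,σ)|_ξ ≥ |Hom_μ(α',F',δ',σ)|_{ξ'}`. -/
theorem stmt13 {G : Type*} [Group G] [Countable G] [DecidableEq G]
    {X : Type*} [MeasurableSpace X] [MulAction G X]
    (μ : Measure X) [IsProbabilityMeasure μ]
    (hact : ∀ g : G, MeasurePreserving (fun x : X => g • x) μ μ)
    {d : ℕ} (σ : G → Equiv.Perm (Fin d))
    {n n' m m' : ℕ}
    (P : Fin n → Set X) (P' : Fin n' → Set X) (A : Fin m → Set X) (A' : Fin m' → Set X)
    (hP : IsFinPartition P) (hP' : IsFinPartition P')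
    (hA : IsFinPartition A) (hA' : IsFinPartition A')
    (rα : Fin m' → Fin m) (hrα : PartRefines A' A rα)
    (F F' : Finset G) (hF : (1 : G) ∈ F) (hFF' : F ⊆ F')
    (δ δ' : ℝ) (hδ' : 0 < δ') (hδδ' : δ' ≤ δ) :
    (∀ φ : (G → Fin m') → Set (Fin d),
      IsHom μ A' F' δ' σ φ → IsHom μ A F δ σ (coarsenHom rα F φ)) ∧
    (∀ (rξ : Fin m → Fin n) (rξ' : Fin m' → Fin n') (s : Fin n → Fin n'),
      PartRefines A P rξ → PartRefines A' P' rξ' → PartRefines P P' s →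
      (∀ i, rξ' i = s (rξ (rα i))) →
      homCount μ A' rξ' F' δ' σ ≤ homCount μ A rξ F δ σ) := by
  constructor
  · intro φ hφ
    exact coarsen_isHom μ hact σ A A' hA hA' rα hrα F F' hF hFF' hδδ' φ hφ
  · intro rξ rξ' s _ _ _ hcoh
    unfold homCount
    have hsub : restrictHom rξ' '' {φ | IsHom μ A' F' δ' σ φ}
        ⊆ (fun (θ : Fin n → Set (Fin d)) (j' : Fin n') =>
              ⋃ j : {j : Fin n // s j = j'}, θ (j : Fin n))
            '' (restrictHom rξ '' {φ | IsHom μ A F δ σ φ}) := by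
      rintro _ ⟨φ, hφ, rfl⟩
      refine ⟨restrictHom rξ (coarsenHom rα F φ),
        ⟨coarsenHom rα F φ,
          coarsen_isHom μ hact σ A A' hA hA' rα hrα F F' hF hFF' hδδ' φ hφ, rfl⟩, ?_⟩
      exact (restrict_coarsen rα rξ rξ' s hcoh F hF φ).symm
    calc (restrictHom rξ' '' {φ | IsHom μ A' F' δ' σ φ}).ncard
        ≤ ((fun (θ : Fin n → Set (Fin d)) (j' : Fin n') =>
              ⋃ j : {j : Fin n // s j = j'}, θ (j : Fin n))
            '' (restrictHom rξ '' {φ | IsHom μ A F δ σ φ})).ncard :=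
          Set.ncard_le_ncard hsub (Set.toFinite _)
      _ ≤ (restrictHom rξ '' {φ | IsHom μ A F δ σ φ}).ncard :=
          Set.ncard_image_le (Set.toFinite _)
end

section
/- Let ξ ≤ α be finite measurable partitions of a probability space with a measure-preserving action of a countable sofic group G with sofic approximation sequence Σ. Define on homomorphisms to P({1,…,d}) the pseudometric ρ_ξ(φ,ψ) = max_{A∈ξ} |φ(A) Δ ψ(A)|/d, and let h_{Σ,μ}^{ξ,ε}(α) be defined as h_{Σ,μ}^ξ(α) but with |Hom_μ(α,F,δ,σ_i)|_ξ replaced by the maximal cardinality N_ε of an (ε,ρ_ξ)-separated subset of Hom_μ(α,F,δ,σ_i). Then for every finite partition γ and every κ > 0 there exists ε > 0 such that h_{Σ,μ}^γ(β) ≤ h_{Σ,μ}^{γ,ε}(β) + κ for all finite measurable partitions β refining γ. -/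
open MeasureTheory Filter Finset Pointwise

/-- The pseudometric `ρ_ξ(φ,ψ) = max_{A ∈ ξ} |φ(A) Δ ψ(A)|/d` on (atom data of)
homomorphisms, where the values on the atoms of `ξ` are obtained via the refinement
map `r`. -/
noncomputable def rhoXi {G : Type*} [Group G] {m n d : ℕ} (r : Fin m → Fin n)
    (φ ψ : (G → Fin m) → Set (Fin d)) : ℝ :=
  ⨆ j : Fin n, unif (symmDiff (restrictHom r φ j) (restrictHom r ψ j))

/-- `N_ε(S, ρ)`: the maximal cardinality of an `(ε,ρ)`-separated subset of `S`,
i.e. of a subset whose distinct points are at `ρ`-distance at least `ε`. -/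
noncomputable def maxSepCard (ε : ℝ) {H : Type*} (S : Set H) (ρ : H → H → ℝ) : ℕ :=
  sSup {k : ℕ | ∃ Q : Finset H, ↑Q ⊆ S ∧
    (∀ φ ∈ Q, ∀ ψ ∈ Q, φ ≠ ψ → ε ≤ ρ φ ψ) ∧ Q.card = k}

/-- `h_{Σ,μ}^{ξ,ε}(α,F,δ)`, defined like `h_{Σ,μ}^ξ(α,F,δ)` but with
`|Hom_μ(α,F,δ,σ_i)|_ξ` replaced by `N_ε(Hom_μ(α,F,δ,σ_i), ρ_ξ)`. -/
noncomputable def hSepFδ {G : Type*} [Group G] [DecidableEq G]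
    {X : Type*} [MeasurableSpace X] [MulAction G X]
    (ε : ℝ) (μ : Measure X) {m n : ℕ} (A : Fin m → Set X) (r : Fin m → Fin n)
    (F : Finset G) (δ : ℝ) (d : ℕ → ℕ) (σ : ∀ i, G → Equiv.Perm (Fin (d i))) : ℝ :=
  limsup (fun i =>
    Real.log (maxSepCard ε {φ | IsHom μ A F δ (σ i) φ} (rhoXi r)) / d i) atTop

/-- `h_{Σ,μ}^{ξ,ε}(α) = inf_F inf_δ h_{Σ,μ}^{ξ,ε}(α,F,δ)`. -/
noncomputable def hSepLoc {G : Type*} [Group G] [DecidableEq G]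
    {X : Type*} [MeasurableSpace X] [MulAction G X]
    (ε : ℝ) (μ : Measure X) {m n : ℕ} (A : Fin m → Set X) (r : Fin m → Fin n)
    (d : ℕ → ℕ) (σ : ∀ i, G → Equiv.Perm (Fin (d i))) : ℝ :=
  sInf { x | ∃ (F : Finset G) (δ : ℝ), (1 : G) ∈ F ∧ 0 < δ ∧ x = hSepFδ ε μ A r F δ d σ }

/-!
A maximal `ε`-separated subset of `Hom_μ(α,F,δ,σ)` for `ρ_ξ` is an `ε`-net, so each restriction
to `ξ` lies, coordinatewise, within Hamming distance `εd` of the restriction of a net point. Such a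
neighbourhood in `P({1,…,d})ⁿ` has at most `(∑_{k ≤ εd} C(d,k))ⁿ` points, and comparing with
`∑_B ε^{|B|} = (1 + ε)^d` bounds this by `e^{n d (log (1 + ε) - ε log ε)}`. So
`log |Hom|_ξ ≤ log N_ε + n d (log (1 + ε) - ε log ε)`, and the error term divided by `d` is
below `κ` for small `ε`, uniformly in `α`; it survives the `limsup` over `i` and the infimum
over `(F, δ)`.
-/

section SubsetCounting

open Fintype

lemma sum_pow_ncard (α : Type*) [Fintype α] (x : ℝ) :
    ∑ B : Set α, x ^ B.ncard = (1 + x) ^ card α := by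
  rw [← Fintype.sum_equiv Fintype.finsetEquivSet (fun s => x ^ #s) _ (by simp), add_comm]
  simpa using Fintype.sum_pow_mul_eq_add_pow α x 1

lemma ncard_setOf_forall_ncard_le_mul_pow_le (ι α : Type*) [Fintype ι] [Fintype α]
    (K : ℕ) {x : ℝ} (hx₀ : 0 ≤ x) (hx₁ : x ≤ 1) :
    ({u : ι → Set α | ∀ j, (u j).ncard ≤ K}.ncard : ℝ) * x ^ (K * card ι)
      ≤ (1 + x) ^ (card α * card ι) := by
  classical
  calc ({u : ι → Set α | ∀ j, (u j).ncard ≤ K}.ncard : ℝ) * x ^ (K * card ι)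
      = ∑ u ∈ univ.filter (fun u : ι → Set α => ∀ j, (u j).ncard ≤ K), ∏ _j : ι, x ^ K := by
        rw [Set.ncard_eq_toFinset_card', Set.toFinset_ofPred, sum_const, prod_const, ← pow_mul,
          nsmul_eq_mul, card_univ]
    _ ≤ ∑ u ∈ univ.filter (fun u : ι → Set α => ∀ j, (u j).ncard ≤ K), ∏ j, x ^ (u j).ncard :=
        sum_le_sum fun u hu => prod_le_prod (fun _ _ => by positivity)
          fun j _ => pow_le_pow_of_le_one hx₀ hx₁ ((mem_filter.1 hu).2 j)
    _ ≤ ∑ u : ι → Set α, ∏ j, x ^ (u j).ncard :=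
        sum_le_sum_of_subset_of_nonneg (filter_subset _ _) fun _ _ _ => by positivity
    _ = (1 + x) ^ (card α * card ι) := by
        rw [← Fintype.prod_sum (fun (_ : ι) (B : Set α) => x ^ B.ncard)]
        simp [sum_pow_ncard, pow_mul]

end SubsetCounting

/-- By `log_ncard_setOf_forall_ncard_le_floor_le`, a normalised Hamming `ε`-neighbourhood in
`P({1,…,d})ⁿ` has at most `e^{n d · coverRate ε}` points. -/
noncomputable def coverRate (ε : ℝ) : ℝ := Real.log (1 + ε) + Real.negMulLog ε

lemma coverRate_nonneg {ε : ℝ} (hε₀ : 0 ≤ ε) (hε₁ : ε ≤ 1) : 0 ≤ coverRate ε :=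
  add_nonneg (Real.log_nonneg (by linarith)) (Real.negMulLog_nonneg hε₀ hε₁)

lemma exists_mul_coverRate_lt (n : ℕ) {κ : ℝ} (hκ : 0 < κ) :
    ∃ ε, 0 < ε ∧ ε ≤ 1 ∧ n * coverRate ε < κ := by
  have hcont : ContinuousAt (fun ε => (n : ℝ) * coverRate ε) 0 :=
    continuousAt_const.mul (((continuousAt_const.add continuousAt_id).log (by norm_num)).add
      Real.continuous_negMulLog.continuousAt)
  have hlim : Filter.Tendsto (fun ε => (n : ℝ) * coverRate ε) (nhdsWithin 0 (Set.Ioi 0))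
      (nhds 0) := by
    simpa [coverRate] using hcont.tendsto.mono_left nhdsWithin_le_nhds
  obtain ⟨ε, hlt, hε⟩ :=
    ((hlim.eventually (gt_mem_nhds hκ)).and (Ioc_mem_nhdsGT zero_lt_one)).exists
  exact ⟨ε, hε.1, hε.2, hlt⟩

lemma log_ncard_setOf_forall_ncard_le_floor_le (n d : ℕ) {ε : ℝ} (hε₀ : 0 < ε) (hε₁ : ε ≤ 1) :
    Real.log {u : Fin n → Set (Fin d) | ∀ j, (u j).ncard ≤ ⌊ε * d⌋₊}.ncard
      ≤ n * d * coverRate ε := by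
  set K := ⌊ε * d⌋₊
  set c := {u : Fin n → Set (Fin d) | ∀ j, (u j).ncard ≤ K}.ncard
  have hc : 0 < c := (Set.ncard_pos (Set.toFinite _)).2 ⟨fun _ => ∅, by simp⟩
  have hcount := ncard_setOf_forall_ncard_le_mul_pow_le (Fin n) (Fin d) K hε₀.le hε₁
  simp only [Fintype.card_fin] at hcount
  have hlog := Real.log_le_log (by positivity) hcount
  rw [Real.log_mul (by positivity) (by positivity), Real.log_pow, Real.log_pow] at hlog
  have hK : (K : ℝ) ≤ ε * d := Nat.floor_le (by positivity)
  have hlogε : Real.log ε ≤ 0 := Real.log_nonpos hε₀.le hε₁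
  have hKlog : ε * d * (n * Real.log ε) ≤ K * (n * Real.log ε) :=
    mul_le_mul_of_nonpos_right hK (mul_nonpos_of_nonneg_of_nonpos n.cast_nonneg hlogε)
  simp only [coverRate, Real.negMulLog]
  push_cast at hlog
  linarith

lemma Set.ncard_biUnion_le {α β : Type*} [Finite β] (Q : Finset α) (t : α → Set β) :
    (⋃ a ∈ Q, t a).ncard ≤ ∑ a ∈ Q, (t a).ncard := by
  classical
  induction Q using Finset.induction with
  | empty => simp
  | insert a Q ha ih =>
    rw [sum_insert ha, set_biUnion_insert]
    exact (Set.ncard_union_le _ _).trans (by omega)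

section Separated

variable {H : Type*} {ρ : H → H → ℝ} {ε : ℝ}

def separatedCards (ε : ℝ) (S : Set H) (ρ : H → H → ℝ) : Set ℕ :=
  {k : ℕ | ∃ Q : Finset H, ↑Q ⊆ S ∧ (∀ φ ∈ Q, ∀ ψ ∈ Q, φ ≠ ψ → ε ≤ ρ φ ψ) ∧ Q.card = k}

lemma maxSepCard_eq_sSup (S : Set H) : maxSepCard ε S ρ = sSup (separatedCards ε S ρ) := rfl

lemma zero_mem_separatedCards (S : Set H) : 0 ∈ separatedCards ε S ρ := ⟨∅, by simp⟩

variable {V : Type*} [Finite V] (f : H → V) (hf : ∀ φ ψ, f φ = f ψ → ρ φ ψ < ε)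
include hf

lemma card_le_natCard_of_separated {Q : Finset H}
    (hQ : ∀ φ ∈ Q, ∀ ψ ∈ Q, φ ≠ ψ → ε ≤ ρ φ ψ) : Q.card ≤ Nat.card V := by
  have hinj : Set.InjOn f Q := fun φ hφ ψ hψ hfφψ => by
    by_contra hne
    exact (hQ φ hφ ψ hψ hne).not_gt (hf φ ψ hfφψ)
  rw [← Set.ncard_coe_finset, ← hinj.ncard_image]
  exact Set.ncard_le_card _

lemma bddAbove_separatedCards (S : Set H) : BddAbove (separatedCards ε S ρ) := by
  refine ⟨Nat.card V, ?_⟩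
  rintro _ ⟨Q, -, hQ, rfl⟩
  exact card_le_natCard_of_separated f hf hQ

lemma maxSepCard_le_natCard (S : Set H) : maxSepCard ε S ρ ≤ Nat.card V :=
  csSup_le ⟨0, zero_mem_separatedCards S⟩ fun _ ⟨_, _, hQ, hk⟩ =>
    hk ▸ card_le_natCard_of_separated f hf hQ

lemma exists_card_eq_maxSepCard_forall_exists_lt (hρ : ∀ φ ψ, ρ φ ψ = ρ ψ φ) (S : Set H) :
    ∃ Q : Finset H, ↑Q ⊆ S ∧ Q.card = maxSepCard ε S ρ ∧ ∀ φ ∈ S, ∃ ψ ∈ Q, ρ φ ψ < ε := by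
  classical
  obtain ⟨Q, hQS, hQ, hcard⟩ :=
    Nat.sSup_mem ⟨0, zero_mem_separatedCards S⟩ (bddAbove_separatedCards f hf S)
  refine ⟨Q, hQS, hcard, fun φ hφ => ?_⟩
  by_contra! hfar
  have hφQ : φ ∉ Q := fun hφQ => (hfar φ hφQ).not_gt (hf φ φ rfl)
  have hsep : Q.card + 1 ≤ maxSepCard ε S ρ := by
    refine le_csSup (bddAbove_separatedCards f hf S)
      ⟨insert φ Q, ?_, ?_, card_insert_of_notMem hφQ⟩
    · simpa [Set.insert_subset_iff] using ⟨hφ, hQS⟩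
    · simp only [mem_insert]
      rintro a (rfl | ha) b (rfl | hb) hab
      exacts [absurd rfl hab, hfar b hb, hρ a b ▸ hfar a ha, hQ a ha b hb hab]
  rw [maxSepCard_eq_sSup, ← hcard] at hsep
  omega

lemma ncard_image_le_maxSepCard_mul (hρ : ∀ φ ψ, ρ φ ψ = ρ ψ φ) (S : Set H) {M : ℕ}
    (hM : ∀ ψ, (f '' {φ | ρ φ ψ < ε}).ncard ≤ M) :
    (f '' S).ncard ≤ maxSepCard ε S ρ * M := by
  obtain ⟨Q, -, hcard, hnet⟩ := exists_card_eq_maxSepCard_forall_exists_lt f hf hρ S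
  have hcover : f '' S ⊆ ⋃ ψ ∈ Q, f '' {φ | ρ φ ψ < ε} := by
    rintro _ ⟨φ, hφ, rfl⟩
    obtain ⟨ψ, hψ, hlt⟩ := hnet φ hφ
    exact Set.mem_biUnion hψ ⟨φ, hlt, rfl⟩
  calc (f '' S).ncard ≤ (⋃ ψ ∈ Q, f '' {φ | ρ φ ψ < ε}).ncard :=
        Set.ncard_le_ncard hcover (Set.toFinite _)
    _ ≤ ∑ ψ ∈ Q, (f '' {φ | ρ φ ψ < ε}).ncard := Set.ncard_biUnion_le _ _
    _ ≤ Q.card * M := by simpa using sum_le_sum fun ψ _ => hM ψ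
    _ = maxSepCard ε S ρ * M := by rw [hcard]

end Separated

section RhoXi

variable {G : Type*} [Group G] {m n d : ℕ} (r : Fin m → Fin n)

lemma rhoXi_comm (φ ψ : (G → Fin m) → Set (Fin d)) : rhoXi r φ ψ = rhoXi r ψ φ := by
  simp only [rhoXi, symmDiff_comm]

lemma rhoXi_eq_zero_of_restrictHom_eq {φ ψ : (G → Fin m) → Set (Fin d)}
    (h : restrictHom r φ = restrictHom r ψ) : rhoXi r φ ψ = 0 := by
  simp [rhoXi, h, unif]

lemma unif_symmDiff_le_rhoXi (φ ψ : (G → Fin m) → Set (Fin d)) (j : Fin n) :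
    unif (symmDiff (restrictHom r φ j) (restrictHom r ψ j)) ≤ rhoXi r φ ψ := by
  unfold rhoXi
  exact le_ciSup (f := fun j => unif (symmDiff (restrictHom r φ j) (restrictHom r ψ j)))
    (Finite.bddAbove_range _) j

lemma rhoXi_lt_of_restrictHom_eq {ε : ℝ} (hε : 0 < ε) (φ ψ : (G → Fin m) → Set (Fin d))
    (h : restrictHom r φ = restrictHom r ψ) : rhoXi r φ ψ < ε :=
  (rhoXi_eq_zero_of_restrictHom_eq r h).trans_lt hε

lemma ncard_symmDiff_le_floor_of_rhoXi_lt {ε : ℝ} {φ ψ : (G → Fin m) → Set (Fin d)}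
    (h : rhoXi r φ ψ < ε) (j : Fin n) :
    (symmDiff (restrictHom r φ j) (restrictHom r ψ j)).ncard ≤ ⌊ε * d⌋₊ := by
  have hunif := (unif_symmDiff_le_rhoXi r φ ψ j).trans_lt h
  rcases d.eq_zero_or_pos with rfl | hd
  · simp [Set.eq_empty_of_isEmpty]
  · rw [unif, div_lt_iff₀ (by positivity)] at hunif
    exact Nat.le_floor hunif.le

lemma ncard_restrictHom_image_ball_le (ε : ℝ) (ψ : (G → Fin m) → Set (Fin d)) :
    (restrictHom r '' {φ | rhoXi r φ ψ < ε}).ncard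
      ≤ {u : Fin n → Set (Fin d) | ∀ j, (u j).ncard ≤ ⌊ε * d⌋₊}.ncard := by
  refine Set.ncard_le_ncard_of_injOn (fun v j => symmDiff (v j) (restrictHom r ψ j)) ?_ ?_
    (Set.toFinite _)
  · rintro _ ⟨φ, hφ, rfl⟩
    exact ncard_symmDiff_le_floor_of_rhoXi_lt r hφ
  · exact fun v _ w _ hvw => funext fun j => symmDiff_left_inj.1 (congrFun hvw j)

lemma log_ncard_restrictHom_image_le {ε : ℝ} (hε₀ : 0 < ε) (hε₁ : ε ≤ 1)
    (S : Set ((G → Fin m) → Set (Fin d))) :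
    Real.log (restrictHom r '' S).ncard
      ≤ Real.log (maxSepCard ε S (rhoXi r)) + n * d * coverRate ε := by
  set c := {u : Fin n → Set (Fin d) | ∀ j, (u j).ncard ≤ ⌊ε * d⌋₊}.ncard
  have hcard : (restrictHom r '' S).ncard ≤ maxSepCard ε S (rhoXi r) * c :=
    ncard_image_le_maxSepCard_mul _ (rhoXi_lt_of_restrictHom_eq r hε₀) (rhoXi_comm r) S
      (ncard_restrictHom_image_ball_le r ε)
  have hc := log_ncard_setOf_forall_ncard_le_floor_le n d hε₀ hε₁
  rcases Nat.eq_zero_or_pos (restrictHom r '' S).ncard with h0 | hpos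
  · rw [h0, Nat.cast_zero, Real.log_zero]
    have := coverRate_nonneg hε₀.le hε₁
    positivity
  · obtain ⟨hN, hc₀⟩ := CanonicallyOrderedAdd.mul_pos.1 (hpos.trans_le hcard)
    calc Real.log (restrictHom r '' S).ncard
        ≤ Real.log (maxSepCard ε S (rhoXi r) * c : ℕ) :=
          Real.log_le_log (by exact_mod_cast hpos) (by exact_mod_cast hcard)
      _ = Real.log (maxSepCard ε S (rhoXi r)) + Real.log c := by
          push_cast
          exact Real.log_mul (by positivity) (by positivity)
      _ ≤ _ := by gcongr

end RhoXi

lemma Filter.limsup_le_limsup_add {ι : Type*} {l : Filter ι} [l.NeBot] {u v : ι → ℝ} {c : ℝ}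
    (h : ∀ᶠ i in l, u i ≤ v i + c) (hu : l.IsBoundedUnder (· ≥ ·) u)
    (hv : l.IsBoundedUnder (· ≤ ·) v) :
    limsup u l ≤ limsup v l + c := by
  have hv' : l.IsBoundedUnder (· ≥ ·) v := by
    obtain ⟨b, hb⟩ := hu
    refine ⟨b - c, ?_⟩
    rw [eventually_map] at hb ⊢
    filter_upwards [hb, h] with i hbi hi
    linarith
  rw [← limsup_add_const l v c hv hv'.isCoboundedUnder_le]
  exact limsup_le_limsup h hu.isCoboundedUnder_le (isBoundedUnder_le_add hv isBoundedUnder_const)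

lemma csInf_le_csInf_add {s t : Set ℝ} {c : ℝ} (hs : BddBelow s) (ht : t.Nonempty)
    (h : ∀ y ∈ t, ∃ x ∈ s, x ≤ y + c) : sInf s ≤ sInf t + c := by
  rw [← sub_le_iff_le_add]
  refine le_csInf ht fun y hy => ?_
  obtain ⟨x, hx, hxy⟩ := h y hy
  linarith [csInf_le hs hx]

lemma log_div_le_mul_log_two {n d k : ℕ} (hk : k ≤ Nat.card (Fin n → Set (Fin d))) :
    Real.log k / d ≤ n * Real.log 2 := by
  have hcard : Nat.card (Fin n → Set (Fin d)) = 2 ^ (d * n) := by simp [pow_mul]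
  have hlog : Real.log k ≤ Real.log (2 ^ (d * n) : ℕ) := by
    rcases k.eq_zero_or_pos with rfl | hk₀
    · simpa using Real.log_natCast_nonneg (2 ^ (d * n))
    · exact Real.log_le_log (by positivity) (by exact_mod_cast hcard ▸ hk)
  refine div_le_of_le_mul₀ d.cast_nonneg (by positivity) ?_
  rw [Nat.cast_pow, Real.log_pow] at hlog
  push_cast at hlog
  linarith

section SoficEntropy

variable {G : Type*} [Group G] [DecidableEq G] {X : Type*} [MeasurableSpace X] [MulAction G X]
  (μ : Measure X) {m n : ℕ} (A : Fin m → Set X) (r : Fin m → Fin n) (F : Finset G) (δ : ℝ)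
  (dseq : ℕ → ℕ) (σ : ∀ i, G → Equiv.Perm (Fin (dseq i)))

lemma hFδ_le_hSepFδ_add {ε : ℝ} (hε₀ : 0 < ε) (hε₁ : ε ≤ 1) :
    hFδ μ A r F δ dseq σ ≤ hSepFδ ε μ A r F δ dseq σ + n * coverRate ε := by
  refine limsup_le_limsup_add (Eventually.of_forall fun i => ?_)
    (isBoundedUnder_of ⟨0, fun i => by positivity⟩)
    (isBoundedUnder_of ⟨n * Real.log 2, fun i => log_div_le_mul_log_two
      (maxSepCard_le_natCard _ (rhoXi_lt_of_restrictHom_eq r hε₀) _)⟩)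
  rcases (dseq i).eq_zero_or_pos with h0 | hd
  · simpa [h0] using mul_nonneg n.cast_nonneg (coverRate_nonneg hε₀.le hε₁)
  · rw [div_add' _ _ _ (by positivity), div_le_div_iff_of_pos_right (by positivity)]
    have := log_ncard_restrictHom_image_le r hε₀ hε₁ {φ | IsHom μ A F δ (σ i) φ}
    rw [homCount]
    linarith

lemma hFδ_nonneg : 0 ≤ hFδ μ A r F δ dseq σ :=
  le_limsup_of_frequently_le (Frequently.of_forall fun i => by positivity)
    (isBoundedUnder_of ⟨n * Real.log 2, fun i => log_div_le_mul_log_two (Set.ncard_le_card _)⟩)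

lemma hPartLoc_le_hSepLoc_add {ε : ℝ} (hε₀ : 0 < ε) (hε₁ : ε ≤ 1) :
    hPartLoc μ A r dseq σ ≤ hSepLoc ε μ A r dseq σ + n * coverRate ε := by
  refine csInf_le_csInf_add ⟨0, ?_⟩ ⟨_, {1}, 1, mem_singleton_self 1, one_pos, rfl⟩ ?_
  · rintro _ ⟨F, δ, -, -, rfl⟩
    exact hFδ_nonneg μ A r F δ dseq σ
  · rintro _ ⟨F, δ, hF, hδ, rfl⟩
    exact ⟨_, ⟨F, δ, hF, hδ, rfl⟩, hFδ_le_hSepFδ_add μ A r F δ dseq σ hε₀ hε₁⟩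

end SoficEntropy

theorem stmt14_general {G : Type*} [Group G] [DecidableEq G]
    {X : Type*} [MeasurableSpace X] [MulAction G X]
    (μ : Measure X)
    (dseq : ℕ → ℕ) (σ : ∀ i, G → Equiv.Perm (Fin (dseq i)))
    {n : ℕ} (P : Fin n → Set X) (κ : ℝ) (hκ : 0 < κ) :
    ∃ ε > 0, ∀ {m : ℕ} (A : Fin m → Set X) (r : Fin m → Fin n),
      IsFinPartition A → PartRefines A P r →
      hPartLoc μ A r dseq σ ≤ hSepLoc ε μ A r dseq σ + κ := by
  obtain ⟨ε, hε₀, hε₁, hεκ⟩ := exists_mul_coverRate_lt n hκ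
  exact ⟨ε, hε₀, fun A r _ _ =>
    (hPartLoc_le_hSepLoc_add μ A r dseq σ hε₀ hε₁).trans (by linarith)⟩

/-- Lemma 2.5.  Let `γ` be a finite measurable partition and `κ > 0`.
Then there is `ε > 0` such that `h_{Σ,μ}^γ(β) ≤ h_{Σ,μ}^{γ,ε}(β) + κ` for all finite
measurable partitions `β` refining `γ`. -/
theorem stmt14 {G : Type*} [Group G] [Countable G] [DecidableEq G]
    {X : Type*} [MeasurableSpace X] [MulAction G X]
    (μ : Measure X) [IsProbabilityMeasure μ]
    (hact : ∀ g : G, MeasurePreserving (fun x : X => g • x) μ μ)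
    (dseq : ℕ → ℕ) (σ : ∀ i, G → Equiv.Perm (Fin (dseq i)))
    (hσ : IsSoficApprox dseq σ)
    {n : ℕ} (P : Fin n → Set X) (hP : IsFinPartition P) (κ : ℝ) (hκ : 0 < κ) :
    ∃ ε > 0, ∀ {m : ℕ} (A : Fin m → Set X) (r : Fin m → Fin n),
      IsFinPartition A → PartRefines A P r →
      hPartLoc μ A r dseq σ ≤ hSepLoc ε μ A r dseq σ + κ :=
  stmt14_general μ dseq σ P κ hκ
end
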